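/- For the stochastic process W_t with W_k = 1 and, for t > k, W_t = W_{t-1} + 1 with probability p·W_{t-1}/(t-1) and W_t = W_{t-1} otherwise (where p ∈ (0,1)), the expectation satisfies E[W_n] = Γ(n+p)·Γ(k) / (Γ(p+k)·Γ(n)) for all n ≥ k ≥ 1. -/

import Mathlib

open MeasureTheory ProbabilityTheory

/-- Expectation of the preferential-attachment component-size process:
`W k = 1` and `E[W t] = (1 + p/(t-1)) E[W (t-1)]` for `t > k` implies
`E[W n] = Γ(n+p) Γ(k) / (Γ(p+k) Γ(n))` for `n ≥ k ≥ 1`. -/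
theorem stmt0 {Ω : Type*} [MeasureSpace Ω] [IsProbabilityMeasure (ℙ : Measure Ω)]
    (p : ℝ) (hp : p ∈ Set.Ioo (0 : ℝ) 1) (k : ℕ) (hk : 1 ≤ k)
    (W : ℕ → Ω → ℝ) (hint : ∀ t, Integrable (W t) ℙ)
    (hstart : ∫ ω, W k ω = 1)
    (hrec : ∀ t, k < t → ∫ ω, W t ω = (1 + p / ((t : ℝ) - 1)) * ∫ ω, W (t - 1) ω)
    (n : ℕ) (hn : k ≤ n) :
    ∫ ω, W n ω =
      Real.Gamma ((n : ℝ) + p) * Real.Gamma (k : ℝ) /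
        (Real.Gamma (p + (k : ℝ)) * Real.Gamma (n : ℝ)) := by
  have hppos : 0 < p := hp.1
  induction n, hn using Nat.le_induction with
  | base =>
    have h1 : Real.Gamma (p + (k : ℝ)) ≠ 0 :=
      (Real.Gamma_pos_of_pos (by positivity)).ne'
    have h2 : Real.Gamma (k : ℝ) ≠ 0 := by
      have : (0:ℝ) < k := by exact_mod_cast hk
      exact (Real.Gamma_pos_of_pos this).ne'
    rw [hstart, add_comm]
    field_simp
  | succ n hn ih =>
    have hn1 : (1:ℕ) ≤ n := le_trans hk hn
    have hnpos : (0:ℝ) < n := by exact_mod_cast hn1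
    have hrecn := hrec (n + 1) (by omega)
    simp only [Nat.add_sub_cancel] at hrecn
    have hcast : ((n + 1 : ℕ) : ℝ) - 1 = (n : ℝ) := by push_cast; ring
    rw [hrecn, hcast, ih]
    have hG1 : Real.Gamma (((n + 1 : ℕ) : ℝ) + p) = ((n : ℝ) + p) * Real.Gamma ((n : ℝ) + p) := by
      have : ((n + 1 : ℕ) : ℝ) + p = ((n : ℝ) + p) + 1 := by push_cast; ring
      rw [this, Real.Gamma_add_one (by positivity)]
    have hG2 : Real.Gamma ((n + 1 : ℕ) : ℝ) = (n : ℝ) * Real.Gamma (n : ℝ) := by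
      have : ((n + 1 : ℕ) : ℝ) = (n : ℝ) + 1 := by push_cast; ring
      rw [this, Real.Gamma_add_one hnpos.ne']
    rw [hG1, hG2]
    have hGk : Real.Gamma (p + (k : ℝ)) ≠ 0 :=
      (Real.Gamma_pos_of_pos (by positivity)).ne'
    have hGn : Real.Gamma (n : ℝ) ≠ 0 := (Real.Gamma_pos_of_pos hnpos).ne'
    field_simp
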